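/- arXiv:2510.05622 — 11 statements merged into one kernel-verified Lean document; each statement's English description precedes it below -/
import Mathlib

section
/- Let d be an even integer with d ≥ 2. There do not exist integers a₁, a₂, a₃, b₁, b₂, b₃ satisfying simultaneously the four congruences: a₁ + a₂ + a₃ ≡ 0 (mod d), b₁ + a₂ + b₃ + 1 ≡ 0 (mod d), b₁ + b₂ + a₃ + 1 ≡ 0 (mod d), and a₁ + b₂ + b₃ + 1 ≡ 0 (mod d). -/
/-- For even `d ≥ 2`, the four delta-function constraints of the generic Bell
inequality for `(3,2,d)` cannot all be satisfied simultaneously. -/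
theorem no_solution_four_congruences_two_settings
    (d : ℤ) (hd_even : Even d) (hd : 2 ≤ d) :
    ¬ ∃ a₁ a₂ a₃ b₁ b₂ b₃ : ℤ,
        a₁ + a₂ + a₃ ≡ 0 [ZMOD d] ∧
        b₁ + a₂ + b₃ + 1 ≡ 0 [ZMOD d] ∧
        b₁ + b₂ + a₃ + 1 ≡ 0 [ZMOD d] ∧
        a₁ + b₂ + b₃ + 1 ≡ 0 [ZMOD d] := by
  rintro ⟨a₁, a₂, a₃, b₁, b₂, b₃, h1, h2, h3, h4⟩
  have hsum := (h1.add h2).add (h3.add h4)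
  have hd' : (2 : ℤ) ∣ (a₁ + a₂ + a₃ + (b₁ + a₂ + b₃ + 1) + (b₁ + b₂ + a₃ + 1 + (a₁ + b₂ + b₃ + 1))) := by
    have := dvd_trans hd_even.two_dvd (Int.ModEq.dvd hsum.symm)
    simpa using this
  omega
end

section
/- Let d be an even integer with d ≥ 2. The maximum, over all integers a₁, a₂, a₃, b₁, b₂, b₃, of the number of the following four congruences that hold simultaneously is exactly 3: a₁ + a₂ + a₃ ≡ 0 (mod d), b₁ + a₂ + b₃ + 1 ≡ 0 (mod d), b₁ + b₂ + a₃ + 1 ≡ 0 (mod d), a₁ + b₂ + b₃ + 1 ≡ 0 (mod d). That is, at most three can hold simultaneously, and there exist integers for which exactly three hold. -/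
/-- For even `d ≥ 2`, the maximum number of the four delta-function
constraints of the `(3,2,d)` generic Bell inequality that can hold
simultaneously is exactly `3`. -/
theorem max_satisfied_congruences_two_settings_eq_three
    (d : ℤ) (hd_even : Even d) (hd : 2 ≤ d) :
    IsGreatest
      {k : ℕ | ∃ a₁ a₂ a₃ b₁ b₂ b₃ : ℤ,
        k = (if a₁ + a₂ + a₃ ≡ 0 [ZMOD d] then 1 else 0) +
            (if b₁ + a₂ + b₃ + 1 ≡ 0 [ZMOD d] then 1 else 0) +
            (if b₁ + b₂ + a₃ + 1 ≡ 0 [ZMOD d] then 1 else 0) +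
            (if a₁ + b₂ + b₃ + 1 ≡ 0 [ZMOD d] then 1 else 0)} 3 := by
  constructor
  · refine ⟨0, 0, 0, -1, 0, 0, ?_⟩
    have h1 : (0:ℤ) + 0 + 0 ≡ 0 [ZMOD d] := Int.ModEq.refl _
    have h2 : (-1:ℤ) + 0 + 0 + 1 ≡ 0 [ZMOD d] := by norm_num
    have h4 : ¬ ((1:ℤ) ≡ 0 [ZMOD d]) := by
      intro h
      have hdvd : d ∣ 1 := by
        have := h.dvd
        simpa using this.neg_right
      have := Int.le_of_dvd one_pos hdvd
      omega
    simp [h1, h2, h4]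
  · rintro k ⟨a₁, a₂, a₃, b₁, b₂, b₃, rfl⟩
    by_cases h1 : a₁ + a₂ + a₃ ≡ 0 [ZMOD d] <;>
    by_cases h2 : b₁ + a₂ + b₃ + 1 ≡ 0 [ZMOD d] <;>
    by_cases h3 : b₁ + b₂ + a₃ + 1 ≡ 0 [ZMOD d] <;>
    by_cases h4 : a₁ + b₂ + b₃ + 1 ≡ 0 [ZMOD d] <;>
    simp [h1, h2, h3, h4]
    exfalso
    have hsum := ((h1.add h2).add h3).add h4
    obtain ⟨c, hc⟩ := hd_even
    have h2d : (2:ℤ) ∣ d := ⟨c, by omega⟩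
    obtain ⟨e, he⟩ := h2d.trans hsum.dvd
    omega
end

section
/- Let d ≥ 3 be an integer divisible by 3. There do not exist integers a₁, a₂, a₃, b₁, b₂, b₃, c₁, c₂, c₃ satisfying simultaneously the six congruences: a₁ + a₂ + a₃ ≡ 0 (mod d), c₁ + a₂ + b₃ + 1 ≡ 0 (mod d), c₁ + b₂ + a₃ + 1 ≡ 0 (mod d), b₁ + b₂ + b₃ + 1 ≡ 0 (mod d), b₁ + c₂ + a₃ + 1 ≡ 0 (mod d), and a₁ + c₂ + b₃ + 1 ≡ 0 (mod d). -/
/-!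
Taking the six congruences with alternating signs, every variable except `a₃` and `b₃` cancels
and the constants leave `3 (a₃ - b₃) - 1 ≡ 0 (mod d)`. Since `3 ∣ d`, this would make `3`
divide `3 (a₃ - b₃) - 1`, which is impossible.
-/

theorem Int.not_dvd_mul_sub_one_of_dvd {n d : ℤ} (hn : ¬IsUnit n) (hnd : n ∣ d) (k : ℤ) :
    ¬d ∣ n * k - 1 := by
  intro hd
  have h : n ∣ n * k - 1 := hnd.trans hd
  exact hn (isUnit_of_dvd_one ((dvd_sub_right (dvd_mul_right n k)).mp h))

theorem no_solution_six_loop_congruences_three_settings_general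
    (d : ℤ) (hd3 : 3 ∣ d) :
    ¬ ∃ a₁ a₂ a₃ b₁ b₂ b₃ c₁ c₂ c₃ : ℤ,
        a₁ + a₂ + a₃ ≡ 0 [ZMOD d] ∧
        c₁ + a₂ + b₃ + 1 ≡ 0 [ZMOD d] ∧
        c₁ + b₂ + a₃ + 1 ≡ 0 [ZMOD d] ∧
        b₁ + b₂ + b₃ + 1 ≡ 0 [ZMOD d] ∧
        b₁ + c₂ + a₃ + 1 ≡ 0 [ZMOD d] ∧
        a₁ + c₂ + b₃ + 1 ≡ 0 [ZMOD d] := by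
  rintro ⟨a₁, a₂, a₃, b₁, b₂, b₃, c₁, c₂, -, h₁, h₂, h₃, h₄, h₅, h₆⟩
  have hloop : 3 * (a₃ - b₃) - 1 ≡ 0 [ZMOD d] := by
    convert ((((h₁.sub h₂).add h₃).sub h₄).add h₅).sub h₆ using 1 <;> ring
  have hthree : ¬IsUnit (3 : ℤ) := by norm_num [Int.isUnit_iff]
  exact Int.not_dvd_mul_sub_one_of_dvd hthree hd3 _ (Int.modEq_zero_iff_dvd.mp hloop)

/-- For `d ≥ 3` divisible by `3`, the six delta-function constraints forming a
closed loop in the `(3,3,d)` generic Bell inequality cannot all be satisfied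
simultaneously. -/
theorem no_solution_six_loop_congruences_three_settings
    (d : ℤ) (hd3 : 3 ∣ d) (hd : 3 ≤ d) :
    ¬ ∃ a₁ a₂ a₃ b₁ b₂ b₃ c₁ c₂ c₃ : ℤ,
        a₁ + a₂ + a₃ ≡ 0 [ZMOD d] ∧
        c₁ + a₂ + b₃ + 1 ≡ 0 [ZMOD d] ∧
        c₁ + b₂ + a₃ + 1 ≡ 0 [ZMOD d] ∧
        b₁ + b₂ + b₃ + 1 ≡ 0 [ZMOD d] ∧
        b₁ + c₂ + a₃ + 1 ≡ 0 [ZMOD d] ∧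
        a₁ + c₂ + b₃ + 1 ≡ 0 [ZMOD d] :=
  no_solution_six_loop_congruences_three_settings_general d hd3
end

section
/- Let d ≥ 3 be an integer divisible by 3. For any integers a₁, a₂, a₃, b₁, b₂, b₃, c₁, c₂, c₃, at most seven of the following nine congruences hold simultaneously: a₁ + a₂ + a₃ ≡ 0, a₁ + b₂ + c₃ + 1 ≡ 0, a₁ + c₂ + b₃ + 1 ≡ 0, b₁ + a₂ + c₃ + 1 ≡ 0, b₁ + b₂ + b₃ + 1 ≡ 0, b₁ + c₂ + a₃ + 1 ≡ 0, c₁ + a₂ + b₃ + 1 ≡ 0, c₁ + b₂ + a₃ + 1 ≡ 0, c₁ + c₂ + c₃ + 2 ≡ 0 (all mod d). -/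
private lemma key_mod3 : ∀ x1 x2 x3 y1 y2 y3 z1 z2 z3 : ZMod 3,
    (if x1 + y1 + z1 = 0 then 1 else 0) +
    (if x1 + y2 + z3 + 1 = 0 then 1 else 0) +
    (if x1 + y3 + z2 + 1 = 0 then 1 else 0) +
    (if x2 + y1 + z3 + 1 = 0 then 1 else 0) +
    (if x2 + y2 + z2 + 1 = 0 then 1 else 0) +
    (if x2 + y3 + z1 + 1 = 0 then 1 else 0) +
    (if x3 + y1 + z2 + 1 = 0 then 1 else 0) +
    (if x3 + y2 + z1 + 1 = 0 then 1 else 0) +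
    (if x3 + y3 + z3 + 2 = 0 then 1 else 0) ≤ 7 := by decide

private lemma ind_mono {P Q : Prop} [Decidable P] [Decidable Q] (h : P → Q) :
    (if P then (1:ℕ) else 0) ≤ (if Q then 1 else 0) := by
  split_ifs with h1 h2 <;> simp_all

/-- For `d ≥ 3` divisible by `3`, at most seven of the nine delta-function
constraints of the `(3,3,d)` generic Bell inequality can hold simultaneously. -/
theorem at_most_seven_of_nine_congruences
    (d : ℤ) (hd3 : 3 ∣ d) (hd : 3 ≤ d)
    (a₁ a₂ a₃ b₁ b₂ b₃ c₁ c₂ c₃ : ℤ) :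
    (if a₁ + a₂ + a₃ ≡ 0 [ZMOD d] then 1 else 0) +
    (if a₁ + b₂ + c₃ + 1 ≡ 0 [ZMOD d] then 1 else 0) +
    (if a₁ + c₂ + b₃ + 1 ≡ 0 [ZMOD d] then 1 else 0) +
    (if b₁ + a₂ + c₃ + 1 ≡ 0 [ZMOD d] then 1 else 0) +
    (if b₁ + b₂ + b₃ + 1 ≡ 0 [ZMOD d] then 1 else 0) +
    (if b₁ + c₂ + a₃ + 1 ≡ 0 [ZMOD d] then 1 else 0) +
    (if c₁ + a₂ + b₃ + 1 ≡ 0 [ZMOD d] then 1 else 0) +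
    (if c₁ + b₂ + a₃ + 1 ≡ 0 [ZMOD d] then 1 else 0) +
    (if c₁ + c₂ + c₃ + 2 ≡ 0 [ZMOD d] then 1 else 0) ≤ 7 := by
  have h : ∀ x : ℤ, x ≡ 0 [ZMOD d] → ((x : ZMod 3) = 0) := by
    intro x hx
    have h3 : x ≡ 0 [ZMOD 3] := (hx.of_dvd hd3)
    have : (3 : ℤ) ∣ x := Int.modEq_zero_iff_dvd.mp h3
    rwa [show ((3:ℤ)) = ((3:ℕ):ℤ) by norm_num, ← ZMod.intCast_zmod_eq_zero_iff_dvd] at this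
  refine le_trans ?_ (key_mod3 (a₁ : ZMod 3) b₁ c₁ a₂ b₂ c₂ a₃ b₃ c₃)
  gcongr <;> · apply ind_mono; intro hP; have := h _ hP; push_cast at this; linear_combination this
end

section
/- Let d ≥ 3 be an integer divisible by 3. There exist integers a₁, a₂, a₃, b₁, b₂, b₃, c₁, c₂, c₃ for which exactly seven of the following nine congruences hold simultaneously: a₁ + a₂ + a₃ ≡ 0, a₁ + b₂ + c₃ + 1 ≡ 0, a₁ + c₂ + b₃ + 1 ≡ 0, b₁ + a₂ + c₃ + 1 ≡ 0, b₁ + b₂ + b₃ + 1 ≡ 0, b₁ + c₂ + a₃ + 1 ≡ 0, c₁ + a₂ + b₃ + 1 ≡ 0, c₁ + b₂ + a₃ + 1 ≡ 0, c₁ + c₂ + c₃ + 2 ≡ 0 (all mod d). -/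
/-- For `d ≥ 3` divisible by `3`, there exist integer assignments for which
exactly seven of the nine delta-function constraints of the `(3,3,d)` generic
Bell inequality hold simultaneously. -/
theorem exists_seven_of_nine_congruences
    (d : ℤ) (hd3 : 3 ∣ d) (hd : 3 ≤ d) :
    ∃ a₁ a₂ a₃ b₁ b₂ b₃ c₁ c₂ c₃ : ℤ,
      (if a₁ + a₂ + a₃ ≡ 0 [ZMOD d] then 1 else 0) +
      (if a₁ + b₂ + c₃ + 1 ≡ 0 [ZMOD d] then 1 else 0) +
      (if a₁ + c₂ + b₃ + 1 ≡ 0 [ZMOD d] then 1 else 0) +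
      (if b₁ + a₂ + c₃ + 1 ≡ 0 [ZMOD d] then 1 else 0) +
      (if b₁ + b₂ + b₃ + 1 ≡ 0 [ZMOD d] then 1 else 0) +
      (if b₁ + c₂ + a₃ + 1 ≡ 0 [ZMOD d] then 1 else 0) +
      (if c₁ + a₂ + b₃ + 1 ≡ 0 [ZMOD d] then 1 else 0) +
      (if c₁ + b₂ + a₃ + 1 ≡ 0 [ZMOD d] then 1 else 0) +
      (if c₁ + c₂ + c₃ + 2 ≡ 0 [ZMOD d] then 1 else 0) = 7 := by
  refine ⟨-1, -1, 0, 0, 0, 1, -1, -1, 0, ?_⟩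
  have h2 : ¬ ((2 : ℤ) ≡ 0 [ZMOD d]) := by
    intro h
    have : d ∣ 2 := Int.modEq_zero_iff_dvd.mp h
    have := Int.le_of_dvd (by norm_num) this
    omega
  have hm2 : ¬ ((-2 : ℤ) ≡ 0 [ZMOD d]) := by
    intro h
    have : d ∣ 2 := by
      have := Int.modEq_zero_iff_dvd.mp h
      simpa using this.neg_right
    have := Int.le_of_dvd (by norm_num) this
    omega
  norm_num [Int.ModEq.refl, h2, hm2]
end

section
/- Let d be an even integer with d ≥ 2. There do not exist integers a₂, b₁, b₃, c₂, d₁, d₃ satisfying simultaneously the four congruences: d₁ + a₂ + b₃ + 1 ≡ 0 (mod d), d₁ + c₂ + d₃ + 2 ≡ 0 (mod d), b₁ + c₂ + b₃ + 1 ≡ 0 (mod d), and b₁ + a₂ + d₃ + 1 ≡ 0 (mod d). -/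
/-- For even `d ≥ 2`, the second group of four delta-function constraints of
the `(3,4,d)` generic Bell inequality cannot all be satisfied simultaneously. -/
theorem no_solution_second_group_four_settings
    (d : ℤ) (hd_even : Even d) (hd : 2 ≤ d) :
    ¬ ∃ a₂ b₁ b₃ c₂ d₁ d₃ : ℤ,
        d₁ + a₂ + b₃ + 1 ≡ 0 [ZMOD d] ∧
        d₁ + c₂ + d₃ + 2 ≡ 0 [ZMOD d] ∧
        b₁ + c₂ + b₃ + 1 ≡ 0 [ZMOD d] ∧
        b₁ + a₂ + d₃ + 1 ≡ 0 [ZMOD d] := by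
  rintro ⟨a₂, b₁, b₃, c₂, d₁, d₃, h1, h2, h3, h4⟩
  have h := ((h1.add h2).sub (h3.add h4)).dvd
  obtain ⟨m, hm⟩ := hd_even
  have h2d : (2 : ℤ) ∣ d := ⟨m, by omega⟩
  obtain ⟨k, hk⟩ := h2d.trans h
  omega
end

section
/- Let d be an even integer with d ≥ 2. There do not exist integers a₃, b₁, b₂, c₃, d₁, d₂ satisfying simultaneously the four congruences: d₁ + d₂ + c₃ + 2 ≡ 0 (mod d), b₁ + d₂ + a₃ + 1 ≡ 0 (mod d), b₁ + b₂ + c₃ + 1 ≡ 0 (mod d), and d₁ + b₂ + a₃ + 1 ≡ 0 (mod d). -/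
theorem Int.not_dvd_of_even_of_odd {m n : ℤ} (hm : Even m) (hn : Odd n) : ¬ m ∣ n :=
  fun h => Int.not_even_iff_odd.2 hn (even_iff_two_dvd.2 (hm.two_dvd.trans h))

theorem no_solution_third_group_four_settings_general
    (d : ℤ) (hd_even : Even d) :
    ¬ ∃ a₃ b₁ b₂ c₃ d₁ d₂ : ℤ,
        d₁ + d₂ + c₃ + 2 ≡ 0 [ZMOD d] ∧
        b₁ + d₂ + a₃ + 1 ≡ 0 [ZMOD d] ∧
        b₁ + b₂ + c₃ + 1 ≡ 0 [ZMOD d] ∧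
        d₁ + b₂ + a₃ + 1 ≡ 0 [ZMOD d] := by
  rintro ⟨a₃, b₁, b₂, c₃, d₁, d₂, h₁, h₂, h₃, h₄⟩
  have hcomb : 2 * (c₃ - a₃) + 1 ≡ 0 [ZMOD d] := by
    have := (h₁.add h₃).sub (h₂.add h₄)
    ring_nf at this ⊢
    exact this
  exact Int.not_dvd_of_even_of_odd hd_even (odd_two_mul_add_one _) (Int.modEq_zero_iff_dvd.1 hcomb)

/-- For even `d ≥ 2`, the third group of four delta-function constraints of
the `(3,4,d)` generic Bell inequality cannot all be satisfied simultaneously. -/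
theorem no_solution_third_group_four_settings
    (d : ℤ) (hd_even : Even d) (hd : 2 ≤ d) :
    ¬ ∃ a₃ b₁ b₂ c₃ d₁ d₂ : ℤ,
        d₁ + d₂ + c₃ + 2 ≡ 0 [ZMOD d] ∧
        b₁ + d₂ + a₃ + 1 ≡ 0 [ZMOD d] ∧
        b₁ + b₂ + c₃ + 1 ≡ 0 [ZMOD d] ∧
        d₁ + b₂ + a₃ + 1 ≡ 0 [ZMOD d] :=
  no_solution_third_group_four_settings_general d hd_even
end

section
/- Let d be an even integer with d ≥ 2. For any integers a₁, a₂, a₃, b₁, b₂, b₃, c₁, c₂, c₃, d₁, d₂, d₃, at most twelve of the following sixteen congruences hold simultaneously (all mod d): a₁+a₂+a₃ ≡ 0, c₁+a₂+c₃+1 ≡ 0, c₁+c₂+a₃+1 ≡ 0, a₁+c₂+c₃+1 ≡ 0, d₁+a₂+b₃+1 ≡ 0, d₁+c₂+d₃+2 ≡ 0, b₁+c₂+b₃+1 ≡ 0, b₁+a₂+d₃+1 ≡ 0, d₁+d₂+c₃+2 ≡ 0, b₁+d₂+a₃+1 ≡ 0, b₁+b₂+c₃+1 ≡ 0, d₁+b₂+a₃+1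 ≡ 0, c₁+d₂+d₃+2 ≡ 0, c₁+b₂+b₃+1 ≡ 0, a₁+b₂+d₃+1 ≡ 0, a₁+d₂+b₃+1 ≡ 0. -/
/-!
The sixteen congruences split into four groups of four in which every variable occurs exactly
twice, so the left-hand sides of each group add up to an even number plus an odd constant.
An odd integer is never divisible by the even modulus `d`, hence in each group at most three
of the four congruences hold, and at most `4 * 3 = 12` hold in total.
-/

theorem Int.not_modEq_zero_of_odd {d k : ℤ} (hd : Even d) (hk : Odd k) :
    ¬ k ≡ 0 [ZMOD d] := fun h =>
  Int.not_even_iff_odd.mpr hk <|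
    even_iff_two_dvd.mpr <| hd.two_dvd.trans (Int.modEq_zero_iff_dvd.mp h)

theorem Int.not_forall_modEq_zero_of_odd_add {d x y z w : ℤ} (hd : Even d)
    (hodd : Odd (x + y + z + w)) :
    ¬ (x ≡ 0 [ZMOD d] ∧ y ≡ 0 [ZMOD d] ∧ z ≡ 0 [ZMOD d] ∧ w ≡ 0 [ZMOD d]) := by
  rintro ⟨hx, hy, hz, hw⟩
  exact Int.not_modEq_zero_of_odd hd hodd (by simpa using ((hx.add hy).add hz).add hw)

theorem ite_add_ite_add_ite_add_ite_le_three {p q r s : Prop} [Decidable p] [Decidable q]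
    [Decidable r] [Decidable s] (h : ¬ (p ∧ q ∧ r ∧ s)) :
    (if p then 1 else 0) + (if q then 1 else 0) + (if r then 1 else 0) +
      (if s then 1 else 0) ≤ 3 := by
  split_ifs <;> simp_all

theorem Int.count_modEq_zero_le_three_of_odd_add {d : ℤ} (hd : Even d) (x y z w : ℤ)
    (hodd : Odd (x + y + z + w)) :
    (if x ≡ 0 [ZMOD d] then 1 else 0) + (if y ≡ 0 [ZMOD d] then 1 else 0) +
      (if z ≡ 0 [ZMOD d] then 1 else 0) + (if w ≡ 0 [ZMOD d] then 1 else 0) ≤ 3 :=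
  ite_add_ite_add_ite_add_ite_le_three (Int.not_forall_modEq_zero_of_odd_add hd hodd)

theorem at_most_twelve_of_sixteen_congruences_general
    (d : ℤ) (hd_even : Even d)
    (a₁ a₂ a₃ b₁ b₂ b₃ c₁ c₂ c₃ d₁ d₂ d₃ : ℤ) :
    (if a₁ + a₂ + a₃ ≡ 0 [ZMOD d] then 1 else 0) +
    (if c₁ + a₂ + c₃ + 1 ≡ 0 [ZMOD d] then 1 else 0) +
    (if c₁ + c₂ + a₃ + 1 ≡ 0 [ZMOD d] then 1 else 0) +
    (if a₁ + c₂ + c₃ + 1 ≡ 0 [ZMOD d] then 1 else 0) +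
    (if d₁ + a₂ + b₃ + 1 ≡ 0 [ZMOD d] then 1 else 0) +
    (if d₁ + c₂ + d₃ + 2 ≡ 0 [ZMOD d] then 1 else 0) +
    (if b₁ + c₂ + b₃ + 1 ≡ 0 [ZMOD d] then 1 else 0) +
    (if b₁ + a₂ + d₃ + 1 ≡ 0 [ZMOD d] then 1 else 0) +
    (if d₁ + d₂ + c₃ + 2 ≡ 0 [ZMOD d] then 1 else 0) +
    (if b₁ + d₂ + a₃ + 1 ≡ 0 [ZMOD d] then 1 else 0) +
    (if b₁ + b₂ + c₃ + 1 ≡ 0 [ZMOD d] then 1 else 0) +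
    (if d₁ + b₂ + a₃ + 1 ≡ 0 [ZMOD d] then 1 else 0) +
    (if c₁ + d₂ + d₃ + 2 ≡ 0 [ZMOD d] then 1 else 0) +
    (if c₁ + b₂ + b₃ + 1 ≡ 0 [ZMOD d] then 1 else 0) +
    (if a₁ + b₂ + d₃ + 1 ≡ 0 [ZMOD d] then 1 else 0) +
    (if a₁ + d₂ + b₃ + 1 ≡ 0 [ZMOD d] then 1 else 0) ≤ 12 := by
  have group₁ := Int.count_modEq_zero_le_three_of_odd_add hd_even
    (a₁ + a₂ + a₃) (c₁ + a₂ + c₃ + 1) (c₁ + c₂ + a₃ + 1) (a₁ + c₂ + c₃ + 1)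
    ⟨a₁ + a₂ + a₃ + c₁ + c₂ + c₃ + 1, by ring⟩
  have group₂ := Int.count_modEq_zero_le_three_of_odd_add hd_even
    (d₁ + a₂ + b₃ + 1) (d₁ + c₂ + d₃ + 2) (b₁ + c₂ + b₃ + 1) (b₁ + a₂ + d₃ + 1)
    ⟨b₁ + d₁ + a₂ + c₂ + b₃ + d₃ + 2, by ring⟩
  have group₃ := Int.count_modEq_zero_le_three_of_odd_add hd_even
    (d₁ + d₂ + c₃ + 2) (b₁ + d₂ + a₃ + 1) (b₁ + b₂ + c₃ + 1) (d₁ + b₂ + a₃ + 1)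
    ⟨b₁ + d₁ + b₂ + d₂ + a₃ + c₃ + 2, by ring⟩
  have group₄ := Int.count_modEq_zero_le_three_of_odd_add hd_even
    (c₁ + d₂ + d₃ + 2) (c₁ + b₂ + b₃ + 1) (a₁ + b₂ + d₃ + 1) (a₁ + d₂ + b₃ + 1)
    ⟨a₁ + c₁ + b₂ + d₂ + b₃ + d₃ + 2, by ring⟩
  omega

/-- For even `d ≥ 2`, at most twelve of the sixteen delta-function constraints
of the `(3,4,d)` generic Bell inequality can hold simultaneously. -/
theorem at_most_twelve_of_sixteen_congruences
    (d : ℤ) (hd_even : Even d) (hd : 2 ≤ d)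
    (a₁ a₂ a₃ b₁ b₂ b₃ c₁ c₂ c₃ d₁ d₂ d₃ : ℤ) :
    (if a₁ + a₂ + a₃ ≡ 0 [ZMOD d] then 1 else 0) +
    (if c₁ + a₂ + c₃ + 1 ≡ 0 [ZMOD d] then 1 else 0) +
    (if c₁ + c₂ + a₃ + 1 ≡ 0 [ZMOD d] then 1 else 0) +
    (if a₁ + c₂ + c₃ + 1 ≡ 0 [ZMOD d] then 1 else 0) +
    (if d₁ + a₂ + b₃ + 1 ≡ 0 [ZMOD d] then 1 else 0) +
    (if d₁ + c₂ + d₃ + 2 ≡ 0 [ZMOD d] then 1 else 0) +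
    (if b₁ + c₂ + b₃ + 1 ≡ 0 [ZMOD d] then 1 else 0) +
    (if b₁ + a₂ + d₃ + 1 ≡ 0 [ZMOD d] then 1 else 0) +
    (if d₁ + d₂ + c₃ + 2 ≡ 0 [ZMOD d] then 1 else 0) +
    (if b₁ + d₂ + a₃ + 1 ≡ 0 [ZMOD d] then 1 else 0) +
    (if b₁ + b₂ + c₃ + 1 ≡ 0 [ZMOD d] then 1 else 0) +
    (if d₁ + b₂ + a₃ + 1 ≡ 0 [ZMOD d] then 1 else 0) +
    (if c₁ + d₂ + d₃ + 2 ≡ 0 [ZMOD d] then 1 else 0) +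
    (if c₁ + b₂ + b₃ + 1 ≡ 0 [ZMOD d] then 1 else 0) +
    (if a₁ + b₂ + d₃ + 1 ≡ 0 [ZMOD d] then 1 else 0) +
    (if a₁ + d₂ + b₃ + 1 ≡ 0 [ZMOD d] then 1 else 0) ≤ 12 :=
  at_most_twelve_of_sixteen_congruences_general d hd_even a₁ a₂ a₃ b₁ b₂ b₃ c₁ c₂ c₃ d₁ d₂ d₃
end

section
/- Let d ≥ 2 be an integer, ω = exp(2πi/d), Ω = exp(2πi/3), and let α : {1,2,3} × {0,1,2} → ℤ be any function. Then (1/27) · Σ_{n=1}^{d−1} Σ_{γ=0}^{2} Π_{j=1}^{3} ( Σ_{η_j=0}^{2} Ω^{γ η_j} · exp(2πi n η_j/(3d)) · ω^{n α(j, η_j)} ) = (d/9) · Σ_{η₁=0}^{2} Σ_{η₂=0}^{2} Σ_{η₃=0}^{2} δ₃(η̃) · δ_d(η̃/3 + α̃) − 1, where η̃ = η₁+η₂+η₃, α̃ = α(1,η₁)+α(2,η₂)+α(3,η₃), δ₃(x) = 1 if 3 divides x and 0 otherwise, and δ_d(x) = 1 if d divides x and 0 otherwise (in the term δ_d(η̃/3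 + α̃), the quantity η̃/3 is an integer whenever δ₃(η̃) = 1). -/
open Complex Finset

/-! Expanding the product over the three parties turns the Bell function into a sum over
outcome triples `η`, whose term depends only on `η̃` and `α̃`. The sum over `γ` of powers of the
cube root of unity `Ω` is `3 δ₃(η̃)`; when `η̃ = 3k` the phase `exp (2πi n η̃ / (3d))` is `ω^(nk)`,
so the sum over `n = 1, …, d - 1` of `ω^(n(k + α̃))` is `d δ_d(k + α̃) - 1`. Finally, exactly 9 of
the 27 triples have `3 ∣ η̃`. -/

namespace IsPrimitiveRoot

variable {K : Type*} [Field K] {ζ : K} {k : ℕ}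

theorem geom_sum_zpow (hζ : IsPrimitiveRoot ζ k) (m : ℤ) :
    ∑ i ∈ range k, (ζ ^ m) ^ i = if (k : ℤ) ∣ m then (k : K) else 0 := by
  split_ifs with h
  · simp [(hζ.zpow_eq_one_iff_dvd m).2 h]
  · have hne : ζ ^ m ≠ 1 := mt (hζ.zpow_eq_one_iff_dvd m).1 h
    rw [geom_sum_eq hne, ← zpow_natCast, ← zpow_mul, mul_comm, zpow_mul, zpow_natCast,
      hζ.pow_eq_one, one_zpow, sub_self, zero_div]

theorem geom_sum_pow (hζ : IsPrimitiveRoot ζ k) (m : ℕ) :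
    ∑ i ∈ range k, (ζ ^ m) ^ i = if k ∣ m then (k : K) else 0 := by
  simpa [Int.natCast_dvd_natCast] using hζ.geom_sum_zpow m

theorem sum_Icc_zpow (hζ : IsPrimitiveRoot ζ k) (hk : k ≠ 0) (m : ℤ) :
    ∑ n ∈ Icc 1 (k - 1), (ζ ^ m) ^ n = (if (k : ℤ) ∣ m then (k : K) else 0) - 1 := by
  rw [← hζ.geom_sum_zpow m, range_eq_Ico, sum_eq_sum_Ico_succ_bot (Nat.pos_of_ne_zero hk),
    pow_zero, add_sub_cancel_left, Icc_sub_one_right_eq_Ico_of_not_isMin (by simpa using hk)]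

end IsPrimitiveRoot

section Bell

variable {d : ℕ} {ω Ω : ℂ}

theorem bell_product_expand (hω₀ : ω ≠ 0) (α : Fin 3 → Fin 3 → ℤ) (n γ : ℕ) :
    ∏ j : Fin 3, ∑ η : Fin 3,
        Ω ^ (γ * (η : ℕ)) * exp (2 * Real.pi * I * n * (η : ℕ) / (3 * d)) * ω ^ ((n : ℤ) * α j η)
      = ∑ η₁ : Fin 3, ∑ η₂ : Fin 3, ∑ η₃ : Fin 3,
          Ω ^ (γ * ((η₁ : ℕ) + η₂ + η₃)) *
            (exp (2 * Real.pi * I * n * ((η₁ : ℕ) + η₂ + η₃ : ℕ) / (3 * d)) *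
              ω ^ ((n : ℤ) * (α 0 η₁ + α 1 η₂ + α 2 η₃))) := by
  rw [Fin.prod_univ_three, sum_mul_sum, sum_mul]
  refine sum_congr rfl fun η₁ _ => ?_
  rw [sum_mul]
  refine sum_congr rfl fun η₂ _ => ?_
  rw [mul_sum]
  refine sum_congr rfl fun η₃ _ => ?_
  simp only [Nat.cast_add, mul_add, add_div, pow_add, zpow_add₀ hω₀, exp_add]
  ring

theorem bell_config_sum_eq (hω : ω = exp (2 * Real.pi * I / d)) (hΩ : IsPrimitiveRoot Ω 3)
    (hd : d ≠ 0) (s : ℕ) (a : ℤ) :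
    ∑ n ∈ Icc 1 (d - 1), ∑ γ ∈ range 3,
        Ω ^ (γ * s) * (exp (2 * Real.pi * I * n * s / (3 * d)) * ω ^ ((n : ℤ) * a))
      = (if 3 ∣ s then (3 : ℂ) else 0) *
          ((if (d : ℤ) ∣ (s : ℤ) / 3 + a then (d : ℂ) else 0) - 1) := by
  simp_rw [← sum_mul, mul_comm _ s, pow_mul, hΩ.geom_sum_pow, ← mul_sum]
  obtain ⟨k, rfl⟩ | h3 := em (3 ∣ s)
  · have hω₀ : ω ≠ 0 := hω ▸ exp_ne_zero _
    have hterm (n : ℕ) : exp (2 * Real.pi * I * n * (3 * k : ℕ) / (3 * d)) * ω ^ ((n : ℤ) * a)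
        = (ω ^ ((k : ℤ) + a)) ^ n := by
      have hexp : exp (2 * Real.pi * I * n * (3 * k : ℕ) / (3 * d)) = ω ^ (k * n) := by
        rw [hω, ← exp_nat_mul]
        congr 1
        push_cast
        field_simp
      rw [hexp, zpow_add₀ hω₀, mul_pow, pow_mul, mul_comm (n : ℤ), zpow_mul, zpow_natCast,
        zpow_natCast]
    have hω' : IsPrimitiveRoot ω d := hω ▸ isPrimitiveRoot_exp d hd
    simp_rw [hterm, hω'.sum_Icc_zpow hd, if_pos (dvd_mul_right 3 k)]
    push_cast
    rw [Int.mul_ediv_cancel_left k three_ne_zero]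
  · simp [h3]

end Bell

/-- **Local-hidden-variable form of the generic Bell function for `(3,3,d)`.**
Replacing each observable by a predetermined eigenvalue `ω^(α (j, η_j))`, the
classical Bell function equals `𝓛·d − 1`, where
`𝓛 = (1/9) Σ_η δ₃(η̃) δ_d(η̃/3 + α̃)`. -/
theorem lhv_bell_function_three_settings
    (d : ℕ) (hd : 2 ≤ d) (ω Ω : ℂ)
    (hω : ω = Complex.exp (2 * Real.pi * Complex.I / d))
    (hΩ : Ω = Complex.exp (2 * Real.pi * Complex.I / 3))
    (α : Fin 3 → Fin 3 → ℤ) :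
    (1 / 27 : ℂ) *
      ∑ n ∈ Finset.Icc 1 (d - 1), ∑ γ ∈ Finset.range 3, ∏ j : Fin 3,
        ∑ η : Fin 3,
          Ω ^ (γ * (η : ℕ)) *
            Complex.exp (2 * Real.pi * Complex.I * n * (η : ℕ) / (3 * d)) *
            ω ^ ((n : ℤ) * α j η)
    = (d : ℂ) / 9 *
        (∑ η₁ : Fin 3, ∑ η₂ : Fin 3, ∑ η₃ : Fin 3,
          (if 3 ∣ ((η₁ : ℕ) + (η₂ : ℕ) + (η₃ : ℕ)) then (1 : ℂ) else 0) *
          (if (d : ℤ) ∣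
              ((((η₁ : ℕ) + (η₂ : ℕ) + (η₃ : ℕ) : ℕ) : ℤ) / 3 +
                (α 0 η₁ + α 1 η₂ + α 2 η₃))
            then (1 : ℂ) else 0)) - 1 := by
  have hd₀ : d ≠ 0 := by omega
  have hω₀ : ω ≠ 0 := hω ▸ exp_ne_zero _
  have hΩ' : IsPrimitiveRoot Ω 3 := by simpa [hΩ] using isPrimitiveRoot_exp 3 three_ne_zero
  have hsplit (p q : Prop) [Decidable p] [Decidable q] :
      (if p then (3 : ℂ) else 0) * ((if q then (d : ℂ) else 0) - 1)
        = 3 * d * ((if p then 1 else 0) * (if q then 1 else 0)) - 3 * (if p then 1 else 0) := by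
    split_ifs <;> ring
  have hcount : ∑ η₁ : Fin 3, ∑ η₂ : Fin 3, ∑ η₃ : Fin 3,
      (if 3 ∣ ((η₁ : ℕ) + (η₂ : ℕ) + (η₃ : ℕ)) then (1 : ℂ) else 0) = 9 := by
    simp only [Fin.sum_univ_three, Fin.val_zero, Fin.val_one, Fin.val_two]
    norm_num
  simp_rw [bell_product_expand hω₀ α]
  simp only [sum_comm (s := range 3) (t := (univ : Finset (Fin 3))),
    sum_comm (s := Icc 1 (d - 1)) (t := (univ : Finset (Fin 3)))]
  simp_rw [bell_config_sum_eq hω hΩ' hd₀, hsplit, sum_sub_distrib, ← mul_sum, hcount]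
  ring
end

section
/- Let d ≥ 2 and M ≥ 2 be integers, ω = exp(2πi/d), and for a rational ν let X(ν) be the d×d matrix with X(ν)_{n+1,n} = ω^{−ν} (0 ≤ n ≤ d−2), X(ν)_{0,d−1} = ω^{−ν(1−d)}, and all other entries zero, where ω^{x} = exp(2πi x/d). Let ψ = (1/√d) Σ_{k=0}^{d−1} e_k ⊗ e_k ⊗ e_k ∈ ℂ^d ⊗ ℂ^d ⊗ ℂ^d be the tripartite generalized GHZ state. Then for every integer n with 1 ≤ n ≤ d−1 and all η₁, η₂, η₃ ∈ {0, …, M−1} with η₁ + η₂ + η₃ ≡ 0 (mod M), the state ψ is an eigenvector of X(η₁/M)^n ⊗ X(η₂/M)^n ⊗ X(η₃/M)^n with eigenvalue ω^{−n(η₁+η₂+η₃)/M} = exp(−2πi n (η₁+η₂+η₃)/(M d)); in particular the correlation function Eⁿ(η₁,η₂,η₃) = ⟨ψ| X(η₁/M)^n ⊗ X(η₂/M)^n ⊗ X(η₃/M)^n |ψ⟩ equals ω^{−n(η₁+η₂+η₃)/M}. -/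
open Matrix Kronecker

/-- The `d × d` matrix `X(ν)`: the cyclic shift conjugated by the phase shift
`P_ν`, with entries `X(ν)_{n+1,n} = ω^{-ν}` for `0 ≤ n ≤ d-2`,
`X(ν)_{0,d-1} = ω^{-ν(1-d)}`, and zero elsewhere, where
`ω^x = exp(2πi·x/d)`. -/
noncomputable def Xmat (d : ℕ) (ν : ℚ) : Matrix (Fin d) (Fin d) ℂ :=
  Matrix.of fun i j : Fin d =>
    if (i : ℕ) = (j : ℕ) + 1 then
      Complex.exp (2 * Real.pi * Complex.I * (-(ν : ℂ)) / d)
    else if (i : ℕ) = 0 ∧ (j : ℕ) = d - 1 then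
      Complex.exp (2 * Real.pi * Complex.I * (-(ν : ℂ) * (1 - (d : ℂ))) / d)
    else 0

/-! On basis vectors `X(ν)` is the cyclic shift `e_j ↦ e_{j+1}` times the phase `ω^{-ν}`, with an
extra factor `ω^{νd}` when it wraps around from `d-1` to `0`. Hence
`X(ν)^n e_k = ω^{-ν(n - d w)} e_{k+n}`, where the number `w` of wrap-arounds depends on `k` and `n`
only, not on `ν`. On `e_k ⊗ e_k ⊗ e_k` the three factors thus contribute the common phase
`ω^{-(ν₁+ν₂+ν₃)(n - d w)}`, and since `ν₁+ν₂+ν₃ = (η₁+η₂+η₃)/M` is an integer the wrap-around part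
`ω^{d w (ν₁+ν₂+ν₃)}` is `1`. So the composite observable permutes the components of `ψ`
cyclically, all with the same phase `ω^{-n(ν₁+ν₂+ν₃)}`, and `ψ` is a unit vector. -/

open Fin.NatCast

noncomputable def omegaPow (d : ℕ) (x : ℂ) : ℂ :=
  Complex.exp (2 * Real.pi * Complex.I * x / d)

lemma omegaPow_add (d : ℕ) (x y : ℂ) : omegaPow d (x + y) = omegaPow d x * omegaPow d y := by
  rw [omegaPow, omegaPow, omegaPow, ← Complex.exp_add]
  ring_nf

lemma omegaPow_natCast_mul_intCast (d : ℕ) [NeZero d] (m : ℤ) : omegaPow d (d * m) = 1 := by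
  rw [omegaPow, ← Complex.exp_int_mul_two_pi_mul_I m]
  congr 1
  field_simp [NeZero.ne d]

lemma Nat.div_add_mod_add_div (a b d : ℕ) (hd : 0 < d) :
    a / d + (a % d + b) / d = (a + b) / d := by
  conv_rhs => rw [← Nat.mod_add_div a d, add_right_comm, Nat.add_mul_div_left _ _ hd]
  ring

lemma Fin.val_add_natCast {d : ℕ} [NeZero d] (j : Fin d) (n : ℕ) :
    ((j + n : Fin d) : ℕ) = (j + n) % d := by
  rw [Fin.val_add, Fin.val_natCast, Nat.add_mod_mod]

lemma Xmat_mulVec_single (d : ℕ) [NeZero d] (ν : ℚ) (j : Fin d) :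
    Xmat d ν *ᵥ Pi.single j 1 =
      omegaPow d (-ν * (1 - d * (((j : ℕ) + 1) / d : ℕ))) • Pi.single (j + 1) 1 := by
  have hsucc : ((j + 1 : Fin d) : ℕ) = (j + 1) % d := by simpa using Fin.val_add_natCast j 1
  funext i
  rw [mulVec_single_one]
  simp only [col_apply, Xmat, of_apply, Pi.smul_apply, Pi.single_apply, smul_eq_mul, Fin.ext_iff,
    hsucc]
  rcases (Nat.succ_le_of_lt j.isLt).lt_or_eq with hlt | hwrap
  · have hj : (j : ℕ) ≠ d - 1 := by omega
    simp only [Nat.mod_eq_of_lt hlt, Nat.div_eq_of_lt hlt, hj, and_false, if_false]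
    split_ifs <;> simp [omegaPow]
  · have hj : (j : ℕ) = d - 1 := by omega
    rw [show (j : ℕ) + 1 = d from hwrap, Nat.mod_self, Nat.div_self (Nat.pos_of_neZero d)]
    simp only [i.isLt.ne, hj, and_true, if_false]
    split_ifs <;> simp [omegaPow]

lemma Xmat_pow_mulVec_single (d : ℕ) [NeZero d] (ν : ℚ) (n : ℕ) (j : Fin d) :
    Xmat d ν ^ n *ᵥ Pi.single j 1 =
      omegaPow d (-ν * (n - d * (((j : ℕ) + n) / d : ℕ))) • Pi.single (j + n) 1 := by
  induction n with
  | zero => rw [pow_zero, one_mulVec]; simp [Nat.div_eq_of_lt j.isLt, omegaPow]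
  | succ n ih =>
    have hwrap : ((j : ℕ) + n) / d + ((j + n) % d + 1) / d = (j + (n + 1)) / d :=
      Nat.div_add_mod_add_div (j + n) 1 d (Nat.pos_of_neZero d)
    rw [pow_succ', ← mulVec_mulVec, ih, mulVec_smul, Xmat_mulVec_single, smul_smul,
      ← omegaPow_add, Fin.val_add_natCast, ← hwrap, Nat.cast_succ, add_assoc]
    congr 2
    · push_cast
      ring
    · rw [Nat.cast_succ]

lemma kronecker_mulVec_single_one {R l m n o : Type*} [CommSemiring R] [Fintype m] [Fintype n]
    [DecidableEq l] [DecidableEq m] [DecidableEq n] [DecidableEq o]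
    {A : Matrix l m R} {B : Matrix o n R} {i : m} {j : n} {p : l} {q : o} {a b : R}
    (hA : A *ᵥ Pi.single i 1 = a • Pi.single p 1) (hB : B *ᵥ Pi.single j 1 = b • Pi.single q 1) :
    (A ⊗ₖ B) *ᵥ Pi.single (i, j) 1 = (a * b) • Pi.single (p, q) 1 := by
  ext ⟨x, y⟩
  have hx := congrFun hA x
  have hy := congrFun hB y
  simp only [mulVec_single_one, col_apply, Pi.smul_apply, smul_eq_mul] at hx hy ⊢
  rw [kroneckerMap_apply, hx, hy]
  by_cases hxp : x = p <;> by_cases hyq : y = q <;> simp [hxp, hyq]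

lemma omegaPow_phase_of_add_eq_intCast (d : ℕ) [NeZero d] {ν₁ ν₂ ν₃ : ℚ} {s : ℤ}
    (hs : ν₁ + ν₂ + ν₃ = s) (n w : ℕ) :
    omegaPow d (-ν₁ * (n - d * w)) * (omegaPow d (-ν₂ * (n - d * w)) *
      omegaPow d (-ν₃ * (n - d * w))) = omegaPow d (-(ν₁ + ν₂ + ν₃ : ℚ) * n) := by
  have hsC : (ν₁ : ℂ) + ν₂ + ν₃ = s := by exact_mod_cast hs
  rw [← omegaPow_add, ← omegaPow_add,
    show -(ν₁ : ℂ) * (n - d * w) + (-ν₂ * (n - d * w) + -ν₃ * (n - d * w)) =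
      -((ν₁ + ν₂ + ν₃ : ℚ) : ℂ) * n + d * ((s * w : ℤ) : ℂ) by
        push_cast
        linear_combination (d * w : ℂ) * hsC,
    omegaPow_add, omegaPow_natCast_mul_intCast, mul_one]

lemma Xmat_pow_kronecker_mulVec_single (d : ℕ) [NeZero d] {ν₁ ν₂ ν₃ : ℚ} {s : ℤ}
    (hs : ν₁ + ν₂ + ν₃ = s) (n : ℕ) (k : Fin d) :
    ((Xmat d ν₁ ^ n) ⊗ₖ ((Xmat d ν₂ ^ n) ⊗ₖ (Xmat d ν₃ ^ n))) *ᵥ Pi.single (k, k, k) 1 =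
      omegaPow d (-(ν₁ + ν₂ + ν₃ : ℚ) * n) • Pi.single (k + n, k + n, k + n) 1 := by
  rw [kronecker_mulVec_single_one (Xmat_pow_mulVec_single d ν₁ n k)
    (kronecker_mulVec_single_one (Xmat_pow_mulVec_single d ν₂ n k)
      (Xmat_pow_mulVec_single d ν₃ n k)), omegaPow_phase_of_add_eq_intCast d hs]

lemma mulVec_sum_single_of_equiv {R ι α : Type*} [CommSemiring R] [Fintype ι] [Fintype α]
    [DecidableEq α] (A : Matrix α α R) (f : ι → α) (σ : ι ≃ ι) (c : R)
    (hA : ∀ i, A *ᵥ Pi.single (f i) 1 = c • Pi.single (f (σ i)) 1) :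
    A *ᵥ ∑ i, Pi.single (f i) 1 = c • ∑ i, Pi.single (f i) 1 := by
  simp only [mulVec_sum, hA, ← Finset.smul_sum]
  exact congrArg (c • ·) (σ.sum_comp fun i => Pi.single (f i) 1)

lemma star_dotProduct_sum_single_of_injective {ι α : Type*} [Fintype ι] [Fintype α]
    [DecidableEq α] {f : ι → α} (hf : Function.Injective f) :
    star (∑ i, Pi.single (f i) (1 : ℂ)) ⬝ᵥ ∑ i, Pi.single (f i) 1 = Fintype.card ι := by
  classical
  simp [dotProduct_sum, Finset.sum_apply, Pi.single_apply, hf.eq_iff]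

lemma star_dotProduct_self_of_normalized_sum_single {ι α : Type*} [Fintype ι] [Nonempty ι]
    [Fintype α] [DecidableEq α] {f : ι → α} (hf : Function.Injective f) :
    star ((1 / (Real.sqrt (Fintype.card ι) : ℂ)) • (∑ i, Pi.single (f i) 1 : α → ℂ)) ⬝ᵥ
      ((1 / (Real.sqrt (Fintype.card ι) : ℂ)) • (∑ i, Pi.single (f i) 1 : α → ℂ)) = 1 := by
  rw [star_smul, smul_dotProduct, dotProduct_smul, star_dotProduct_sum_single_of_injective hf]
  have hsq : (Real.sqrt (Fintype.card ι) : ℂ) ^ 2 = Fintype.card ι := by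
    rw [← Complex.ofReal_pow, Real.sq_sqrt (Nat.cast_nonneg _), Complex.ofReal_natCast]
  simp only [smul_eq_mul, star_div₀, star_one, Complex.star_def, Complex.conj_ofReal]
  field_simp
  rw [hsq]

theorem ghz_eigenvector_of_composite_observable_general
    (d M : ℕ) (hd : 2 ≤ d)
    (ψ : Fin d × Fin d × Fin d → ℂ)
    (hψ : ψ = (1 / (Real.sqrt d : ℂ)) •
      ∑ k : Fin d, (Pi.single (k, k, k) (1 : ℂ) : Fin d × Fin d × Fin d → ℂ))
    (n : ℕ)
    (η₁ η₂ η₃ : ℕ)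
    (hsum : M ∣ η₁ + η₂ + η₃) :
    ((Xmat d ((η₁ : ℚ) / M) ^ n) ⊗ₖ
        ((Xmat d ((η₂ : ℚ) / M) ^ n) ⊗ₖ (Xmat d ((η₃ : ℚ) / M) ^ n))) *ᵥ ψ =
      Complex.exp (-(2 * Real.pi * Complex.I * n * ((η₁ : ℂ) + η₂ + η₃)) / (M * d)) • ψ ∧
    star ψ ⬝ᵥ
        (((Xmat d ((η₁ : ℚ) / M) ^ n) ⊗ₖ
            ((Xmat d ((η₂ : ℚ) / M) ^ n) ⊗ₖ (Xmat d ((η₃ : ℚ) / M) ^ n))) *ᵥ ψ) =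
      Complex.exp (-(2 * Real.pi * Complex.I * n * ((η₁ : ℂ) + η₂ + η₃)) / (M * d)) := by
  have : NeZero d := ⟨by omega⟩
  have hν : ((η₁ : ℚ) / M + (η₂ : ℚ) / M + (η₃ : ℚ) / M) = (((η₁ + η₂ + η₃) / M : ℕ) : ℤ) := by
    rw [← add_div, ← add_div, Int.cast_natCast, Nat.cast_div_charZero hsum]
    push_cast
    rfl
  have hphase : Complex.exp (-(2 * Real.pi * Complex.I * n * ((η₁ : ℂ) + η₂ + η₃)) / (M * d)) =
      omegaPow d (-(((η₁ : ℚ) / M + (η₂ : ℚ) / M + (η₃ : ℚ) / M : ℚ) : ℂ) * n) := by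
    rw [omegaPow]
    congr 1
    push_cast
    ring
  have heig : ((Xmat d ((η₁ : ℚ) / M) ^ n) ⊗ₖ
        ((Xmat d ((η₂ : ℚ) / M) ^ n) ⊗ₖ (Xmat d ((η₃ : ℚ) / M) ^ n))) *ᵥ ψ =
      Complex.exp (-(2 * Real.pi * Complex.I * n * ((η₁ : ℂ) + η₂ + η₃)) / (M * d)) • ψ := by
    rw [hψ, mulVec_smul, mulVec_sum_single_of_equiv _ _ (Equiv.addRight (n : Fin d)) _
      (Xmat_pow_kronecker_mulVec_single d hν n), smul_comm, hphase]
  have hnorm : star ψ ⬝ᵥ ψ = 1 := by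
    have h := star_dotProduct_self_of_normalized_sum_single
      (f := fun k : Fin d => (k, k, k)) fun a b hab => congrArg Prod.fst hab
    rwa [Fintype.card_fin, ← hψ] at h
  refine ⟨heig, ?_⟩
  rw [heig, dotProduct_smul, hnorm, smul_eq_mul, mul_one]

/-- **The GHZ state is an eigenvector of the composite observables.**
For `1 ≤ n ≤ d-1` and settings `η₁, η₂, η₃ ∈ {0, …, M-1}` with
`M ∣ η₁ + η₂ + η₃`, the tripartite generalized GHZ state
`ψ = (1/√d) Σ_k e_k ⊗ e_k ⊗ e_k` is an eigenvector of
`X(η₁/M)^n ⊗ X(η₂/M)^n ⊗ X(η₃/M)^n` with eigenvalue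
`exp(-2πi n (η₁+η₂+η₃)/(M d))`; in particular the correlation function
`Eⁿ(η₁,η₂,η₃) = ⟨ψ| X(η₁/M)^n ⊗ X(η₂/M)^n ⊗ X(η₃/M)^n |ψ⟩` equals that
eigenvalue. -/
theorem ghz_eigenvector_of_composite_observable
    (d M : ℕ) (hd : 2 ≤ d) (hM : 2 ≤ M)
    (ψ : Fin d × Fin d × Fin d → ℂ)
    (hψ : ψ = (1 / (Real.sqrt d : ℂ)) •
      ∑ k : Fin d, (Pi.single (k, k, k) (1 : ℂ) : Fin d × Fin d × Fin d → ℂ))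
    (n : ℕ) (hn1 : 1 ≤ n) (hn2 : n ≤ d - 1)
    (η₁ η₂ η₃ : ℕ) (h₁ : η₁ < M) (h₂ : η₂ < M) (h₃ : η₃ < M)
    (hsum : M ∣ η₁ + η₂ + η₃) :
    ((Xmat d ((η₁ : ℚ) / M) ^ n) ⊗ₖ
        ((Xmat d ((η₂ : ℚ) / M) ^ n) ⊗ₖ (Xmat d ((η₃ : ℚ) / M) ^ n))) *ᵥ ψ =
      Complex.exp (-(2 * Real.pi * Complex.I * n * ((η₁ : ℂ) + η₂ + η₃)) / (M * d)) • ψ ∧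
    star ψ ⬝ᵥ
        (((Xmat d ((η₁ : ℚ) / M) ^ n) ⊗ₖ
            ((Xmat d ((η₂ : ℚ) / M) ^ n) ⊗ₖ (Xmat d ((η₃ : ℚ) / M) ^ n))) *ᵥ ψ) =
      Complex.exp (-(2 * Real.pi * Complex.I * n * ((η₁ : ℂ) + η₂ + η₃)) / (M * d)) :=
  ghz_eigenvector_of_composite_observable_general d M hd ψ hψ n η₁ η₂ η₃ hsum
end

section
/- Let d ≥ 2 be an integer, ω = exp(2πi/d), Ω = exp(2πi/3), and for a rational ν let X(ν) be the d×d matrix with X(ν)_{n+1,n} = ω^{−ν} (0 ≤ n ≤ d−2), X(ν)_{0,d−1} = ω^{−ν(1−d)}, and all other entries zero, where ω^{x} = exp(2πi x/d). Define the Bell operator B₃ = (1/27) Σ_{n=1}^{d−1} Σ_{γ=0}^{2} ⊗_{j=1}^{3} ( Σ_{η_j=0}^{2} Ω^{γ η_j} · exp(2πi n η_j/(3d)) · X(η_j/3)^n ) acting on ℂ^d ⊗ ℂ^d ⊗ ℂ^d. Then the tripartite generalized GHZ state ψ = (1/√d) Σ_{k=0}^{d−1} e_k ⊗ e_k ⊗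 e_k satisfies B₃ ψ = (d−1) ψ; in particular ⟨ψ| B₃ |ψ⟩ = d − 1. -/
open Matrix Kronecker

/-- The single-party factor `Σ_{η=0}^{2} Ω^{γη} · exp(2πi n η/(3d)) · X(η/3)^n`
of the generic Bell operator for three measurement settings, where
`Ω = exp(2πi/3)`. -/
noncomputable def partyFactor (d γ n : ℕ) : Matrix (Fin d) (Fin d) ℂ :=
  ∑ η ∈ Finset.range 3,
    (Complex.exp (2 * Real.pi * Complex.I / 3) ^ (γ * η) *
      Complex.exp (2 * Real.pi * Complex.I * n * η / (3 * d))) •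
        Xmat d ((η : ℚ) / 3) ^ n

/-- The generic Bell operator
`B₃ = (1/27) Σ_{n=1}^{d-1} Σ_{γ=0}^{2} ⊗_{j=1}^{3} Σ_{η_j=0}^{2}
Ω^{γη_j} exp(2πi n η_j/(3d)) X(η_j/3)^n` for the `(3,3,d)` scenario, realized
on `ℂ^d ⊗ ℂ^d ⊗ ℂ^d` via the Kronecker product. -/
noncomputable def B₃ (d : ℕ) :
    Matrix (Fin d × Fin d × Fin d) (Fin d × Fin d × Fin d) ℂ :=
  (1 / 27 : ℂ) •
    ∑ n ∈ Finset.Icc 1 (d - 1), ∑ γ ∈ Finset.range 3,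
      partyFactor d γ n ⊗ₖ (partyFactor d γ n ⊗ₖ partyFactor d γ n)

local notation "Ω" => Complex.exp (2 * Real.pi * Complex.I / 3)

lemma omega_pow_three : Ω ^ 3 = 1 := by
  rw [← Complex.exp_nat_mul]
  have : ((3 : ℕ) : ℂ) * (2 * Real.pi * Complex.I / 3) = 2 * Real.pi * Complex.I := by
    push_cast; ring
  rw [this, Complex.exp_two_pi_mul_I]

lemma omega_ne_one : Ω ≠ 1 := by
  intro h
  rw [Complex.exp_eq_one_iff] at h
  obtain ⟨n, hn⟩ := h
  have h2 : (2 : ℂ) * Real.pi * Complex.I ≠ 0 := by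
    simp [Real.pi_ne_zero, Complex.I_ne_zero]
  have h3 : (2 * Real.pi * Complex.I) * ((n : ℂ) * 3) =
      (2 * Real.pi * Complex.I) * 1 := by linear_combination (-3 : ℂ) * hn
  have h4 : (n : ℂ) * 3 = 1 := mul_left_cancel₀ h2 h3
  have h5 : (n * 3 : ℤ) = 1 := by exact_mod_cast h4
  omega

lemma omega_sum : 1 + Ω + Ω ^ 2 = 0 := by
  have h2 : (Ω - 1) * (1 + Ω + Ω ^ 2) = 0 := by
    linear_combination omega_pow_three
  rcases mul_eq_zero.mp h2 with h3 | h3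
  · exact absurd (by linear_combination h3) omega_ne_one
  · exact h3

lemma sumS (m : ℕ) (hm : m ≤ 3) :
    ∑ η ∈ Finset.range 3, Ω ^ (η * m) = if m = 0 ∨ m = 3 then 3 else 0 := by
  interval_cases m <;>
    simp only [Finset.sum_range_succ, Finset.sum_range_zero] <;> norm_num
  · linear_combination omega_sum
  · linear_combination omega_sum + Ω * omega_pow_three
  · linear_combination (2 + Ω ^ 3) * omega_pow_three

lemma sum_gamma (w : ℕ) (hw : w ≤ 1) :
    ∑ γ ∈ Finset.range 3, (∑ η ∈ Finset.range 3, Ω ^ (η * (γ + w))) ^ 3 = 27 := by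
  have key : ∀ γ ∈ Finset.range 3,
      (∑ η ∈ Finset.range 3, Ω ^ (η * (γ + w))) ^ 3 =
        if γ + w = 0 ∨ γ + w = 3 then 27 else 0 := by
    intro γ hγ
    rw [sumS (γ + w) (by simp at hγ; omega)]
    split <;> norm_num
  rw [Finset.sum_congr rfl key]
  interval_cases w <;> norm_num [Finset.sum_range_succ]

lemma Xmat_pow_apply (d : ℕ) (hd : 0 < d) (ν : ℚ) (n : ℕ) (i j : Fin d) :
    (Xmat d ν ^ n) i j =
      if (i : ℕ) = ((j : ℕ) + n) % d then
        Complex.exp (2 * Real.pi * Complex.I * (-(ν : ℂ) * n) / d) *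
          Complex.exp (2 * Real.pi * Complex.I * (ν : ℂ) * ((((j : ℕ) + n) / d : ℕ) : ℂ))
      else 0 := by
  have hdC : (d : ℂ) ≠ 0 := Nat.cast_ne_zero.mpr hd.ne'
  induction n generalizing i with
  | zero =>
      rw [pow_zero, Matrix.one_apply]
      simp [Nat.mod_eq_of_lt j.isLt, Nat.div_eq_of_lt j.isLt, Fin.val_eq_val]
  | succ n ih =>
      rw [pow_succ', Matrix.mul_apply]
      set q : ℕ := ((j : ℕ) + n) / d with hq
      set r : ℕ := ((j : ℕ) + n) % d with hr
      have hrd : r < d := Nat.mod_lt _ hd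
      set t0 : Fin d := ⟨r, hrd⟩ with ht0
      have hdm : (j : ℕ) + n = d * q + r := (Nat.div_add_mod _ _).symm
      rw [Finset.sum_eq_single t0 (fun t _ ht => by
        rw [ih, if_neg, mul_zero]
        exact fun h => ht (Fin.ext h))
        (by simp)]
      rw [ih, if_pos rfl]
      by_cases hw : r = d - 1
      · -- wrap case
        have hjn : (j : ℕ) + (n + 1) = d * (q + 1) := by
          rw [Nat.mul_succ]; omega
        have hmod : ((j : ℕ) + (n + 1)) % d = 0 := by
          rw [hjn, Nat.mul_mod_right]
        have hdiv : ((j : ℕ) + (n + 1)) / d = q + 1 := by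
          rw [hjn, Nat.mul_div_cancel_left _ hd]
        rw [hmod, hdiv]
        have hX : Xmat d ν i t0 =
            if (i : ℕ) = 0 then
              Complex.exp (2 * Real.pi * Complex.I * (-(ν : ℂ) * (1 - (d : ℂ))) / d)
            else 0 := by
          unfold Xmat
          rw [Matrix.of_apply]
          have h1 : ¬ ((i : ℕ) = (t0 : ℕ) + 1) := by
            have := i.isLt; simp only [ht0]; omega
          rw [if_neg h1]
          by_cases h0 : (i : ℕ) = 0
          · rw [if_pos ⟨h0, hw⟩, if_pos h0]
          · rw [if_neg (fun h => h0 h.1), if_neg h0]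
        rw [hX]
        by_cases h0 : (i : ℕ) = 0
        · rw [if_pos h0, if_pos h0]
          rw [← Complex.exp_add, ← Complex.exp_add, ← Complex.exp_add]
          congr 1
          push_cast
          field_simp
          ring
        · rw [if_neg h0, if_neg h0, zero_mul]
      · -- no wrap
        have hmod : ((j : ℕ) + (n + 1)) % d = r + 1 := by
          have h1 : (j : ℕ) + (n + 1) = d * q + (r + 1) := by omega
          rw [h1, Nat.mul_add_mod, Nat.mod_eq_of_lt (by omega)]
        have hdiv : ((j : ℕ) + (n + 1)) / d = q := by
          have h1 : (j : ℕ) + (n + 1) = d * q + (r + 1) := by omega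
          rw [h1, Nat.mul_add_div hd, Nat.div_eq_of_lt (by omega), add_zero]
        rw [hmod, hdiv]
        have hX : Xmat d ν i t0 =
            if (i : ℕ) = r + 1 then
              Complex.exp (2 * Real.pi * Complex.I * (-(ν : ℂ)) / d)
            else 0 := by
          unfold Xmat
          rw [Matrix.of_apply]
          have h2 : ¬ ((i : ℕ) = 0 ∧ (t0 : ℕ) = d - 1) := fun h => hw h.2
          simp only [ht0]
          rw [if_neg h2]
        rw [hX]
        by_cases h1 : (i : ℕ) = r + 1
        · rw [if_pos h1, if_pos h1]
          rw [← Complex.exp_add, ← Complex.exp_add, ← Complex.exp_add]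
          congr 1
          push_cast
          field_simp
          ring
        · rw [if_neg h1, if_neg h1, zero_mul]

lemma partyFactor_apply (d : ℕ) (hd : 0 < d) (γ n : ℕ) (i j : Fin d) :
    partyFactor d γ n i j =
      if (i : ℕ) = ((j : ℕ) + n) % d then
        ∑ η ∈ Finset.range 3, Ω ^ (η * (γ + ((j : ℕ) + n) / d))
      else 0 := by
  have hdC : (d : ℂ) ≠ 0 := Nat.cast_ne_zero.mpr hd.ne'
  unfold partyFactor
  rw [Matrix.sum_apply]
  have key : ∀ η ∈ Finset.range 3,
      ((Ω ^ (γ * η) *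
        Complex.exp (2 * Real.pi * Complex.I * n * η / (3 * d))) •
          Xmat d ((η : ℚ) / 3) ^ n) i j =
        if (i : ℕ) = ((j : ℕ) + n) % d then Ω ^ (η * (γ + ((j : ℕ) + n) / d)) else 0 := by
    intro η _
    rw [Matrix.smul_apply, Xmat_pow_apply d hd _ n i j]
    by_cases h : (i : ℕ) = ((j : ℕ) + n) % d
    · rw [if_pos h, if_pos h]
      rw [smul_eq_mul, ← Complex.exp_nat_mul, ← Complex.exp_nat_mul]
      rw [← Complex.exp_add, ← Complex.exp_add, ← Complex.exp_add]
      congr 1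
      push_cast
      field_simp
      ring
    · rw [if_neg h, if_neg h, smul_zero]
  rw [Finset.sum_congr rfl key]
  split
  · rfl
  · simp

lemma B₃_diag_sum (d : ℕ) (hd : 2 ≤ d) (a b c : Fin d) :
    ∑ k : Fin d, B₃ d (a, b, c) (k, k, k) =
      if b = a ∧ c = a then (d : ℂ) - 1 else 0 := by
  have hd0 : 0 < d := by omega
  haveI : NeZero d := ⟨by omega⟩
  have hentry : ∀ k : Fin d,
      B₃ d (a, b, c) (k, k, k) =
        (1 / 27 : ℂ) * ∑ n ∈ Finset.Icc 1 (d - 1), ∑ γ ∈ Finset.range 3,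
          partyFactor d γ n a k * (partyFactor d γ n b k * partyFactor d γ n c k) := by
    intro k
    unfold B₃
    rw [Matrix.smul_apply, Matrix.sum_apply, smul_eq_mul]
    try exact congrArg _ (Finset.sum_congr rfl fun n _ => Matrix.sum_apply _ _ _ _)
  have step1 : ∀ n ∈ Finset.Icc 1 (d - 1), ∀ k : Fin d,
      (∑ γ ∈ Finset.range 3,
        partyFactor d γ n a k * (partyFactor d γ n b k * partyFactor d γ n c k)) =
      if (a : ℕ) = ((k : ℕ) + n) % d ∧ (b : ℕ) = ((k : ℕ) + n) % d ∧
          (c : ℕ) = ((k : ℕ) + n) % d then (27 : ℂ) else 0 := by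
    intro n hn k
    simp only [Finset.mem_Icc] at hn
    have hw : ((k : ℕ) + n) / d ≤ 1 := by
      have h1 : ((k : ℕ) + n) / d < 2 :=
        (Nat.div_lt_iff_lt_mul hd0).mpr (by have := k.isLt; omega)
      omega
    by_cases hcond : (a : ℕ) = ((k : ℕ) + n) % d ∧ (b : ℕ) = ((k : ℕ) + n) % d ∧
        (c : ℕ) = ((k : ℕ) + n) % d
    · rw [if_pos hcond]
      obtain ⟨ha, hb, hc⟩ := hcond
      have hterm : ∀ γ ∈ Finset.range 3,
          partyFactor d γ n a k * (partyFactor d γ n b k * partyFactor d γ n c k) =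
            (∑ η ∈ Finset.range 3, Ω ^ (η * (γ + ((k : ℕ) + n) / d))) ^ 3 := by
        intro γ _
        rw [partyFactor_apply d hd0, partyFactor_apply d hd0, partyFactor_apply d hd0,
          if_pos ha, if_pos hb, if_pos hc]
        ring
      rw [Finset.sum_congr rfl hterm, sum_gamma _ hw]
    · rw [if_neg hcond]
      refine Finset.sum_eq_zero fun γ _ => ?_
      rw [partyFactor_apply d hd0, partyFactor_apply d hd0, partyFactor_apply d hd0]
      by_cases ha : (a : ℕ) = ((k : ℕ) + n) % d <;>
        by_cases hb : (b : ℕ) = ((k : ℕ) + n) % d <;>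
        by_cases hc : (c : ℕ) = ((k : ℕ) + n) % d <;>
        simp [ha, hb, hc]
      exact absurd ⟨ha, hb, hc⟩ hcond
  have step2 : ∀ n ∈ Finset.Icc 1 (d - 1),
      (∑ k : Fin d, if (a : ℕ) = ((k : ℕ) + n) % d ∧ (b : ℕ) = ((k : ℕ) + n) % d ∧
          (c : ℕ) = ((k : ℕ) + n) % d then (27 : ℂ) else 0) =
        if b = a ∧ c = a then (27 : ℂ) else 0 := by
    intro n hn
    set n0 : Fin d := (⟨n % d, Nat.mod_lt _ hd0⟩ : Fin d) with hn0
    have hval : ∀ k : Fin d, ((k + n0 : Fin d) : ℕ) = ((k : ℕ) + n) % d := by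
      intro k
      rw [Fin.add_def]
      simp only [hn0]
      conv_rhs => rw [Nat.add_mod]
      rw [Nat.mod_eq_of_lt k.isLt]
    have h1 : (∑ k : Fin d, if (a : ℕ) = ((k : ℕ) + n) % d ∧ (b : ℕ) = ((k : ℕ) + n) % d ∧
          (c : ℕ) = ((k : ℕ) + n) % d then (27 : ℂ) else 0)
        = ∑ k : Fin d, if (a : ℕ) = (k : ℕ) ∧ (b : ℕ) = (k : ℕ) ∧ (c : ℕ) = (k : ℕ)
            then (27 : ℂ) else 0 := by
      rw [← Equiv.sum_comp (Equiv.addRight n0)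
        (fun k : Fin d => if (a : ℕ) = (k : ℕ) ∧ (b : ℕ) = (k : ℕ) ∧ (c : ℕ) = (k : ℕ)
          then (27 : ℂ) else 0)]
      refine Finset.sum_congr rfl fun k _ => ?_
      simp only [Equiv.coe_addRight]
      simp only [hval]
    rw [h1]
    have h2 : ∀ k : Fin d,
        ((a : ℕ) = (k : ℕ) ∧ (b : ℕ) = (k : ℕ) ∧ (c : ℕ) = (k : ℕ)) ↔
          (k = a ∧ (b = a ∧ c = a)) := by
      intro k
      constructor
      · rintro ⟨u1, u2, u3⟩
        exact ⟨Fin.ext u1.symm, Fin.ext (by omega), Fin.ext (by omega)⟩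
      · rintro ⟨rfl, u2, u3⟩
        exact ⟨rfl, congrArg Fin.val u2, congrArg Fin.val u3⟩
    simp only [h2]
    by_cases hbc : b = a ∧ c = a
    · simp [hbc]
    · simp [hbc]
  rw [Finset.sum_congr rfl fun k _ => hentry k, ← Finset.mul_sum, Finset.sum_comm]
  have step3 : ∀ n ∈ Finset.Icc 1 (d - 1),
      (∑ k : Fin d, ∑ γ ∈ Finset.range 3,
        partyFactor d γ n a k * (partyFactor d γ n b k * partyFactor d γ n c k)) =
        if b = a ∧ c = a then (27 : ℂ) else 0 := by
    intro n hn
    rw [Finset.sum_congr rfl fun k _ => step1 n hn k, step2 n hn]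
  rw [Finset.sum_congr rfl step3, Finset.sum_const, Nat.card_Icc]
  simp only [nsmul_eq_mul]
  have hcast : ((d - 1 + 1 - 1 : ℕ) : ℂ) = (d : ℂ) - 1 := by
    have : d - 1 + 1 - 1 = d - 1 := by omega
    rw [this, Nat.cast_sub (by omega)]
    norm_num
  rw [hcast]
  by_cases hbc : b = a ∧ c = a <;> simp [hbc] <;> ring

/-- **The GHZ state attains the quantum bound `d - 1` of the generic Bell
operator `B₃`:** `B₃ ψ = (d-1) ψ`, and in particular `⟨ψ|B₃|ψ⟩ = d - 1`. -/
theorem ghz_eigenvector_of_B₃ (d : ℕ) (hd : 2 ≤ d)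
    (ψ : Fin d × Fin d × Fin d → ℂ)
    (hψ : ψ = (1 / (Real.sqrt d : ℂ)) •
      ∑ k : Fin d, (Pi.single (k, k, k) (1 : ℂ) : Fin d × Fin d × Fin d → ℂ)) :
    B₃ d *ᵥ ψ = ((d : ℂ) - 1) • ψ ∧
    star ψ ⬝ᵥ (B₃ d *ᵥ ψ) = (d : ℂ) - 1 := by
  have hdR : (0 : ℝ) ≤ (d : ℝ) := Nat.cast_nonneg d
  have hdC : (d : ℂ) ≠ 0 := Nat.cast_ne_zero.mpr (by omega)
  set c₀ : ℂ := 1 / (Real.sqrt d : ℂ) with hc₀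
  have hψ' : ∀ p : Fin d × Fin d × Fin d, ψ p =
      if p.2.1 = p.1 ∧ p.2.2 = p.1 then c₀ else 0 := by
    intro p
    obtain ⟨x, y, z⟩ := p
    rw [hψ]
    simp only [Pi.smul_apply, Finset.sum_apply, Pi.single_apply, smul_eq_mul]
    have h2 : ∀ k : Fin d, ((x, y, z) = (k, k, k)) ↔ (k = x ∧ (y = x ∧ z = x)) := by
      intro k
      constructor
      · intro h
        rw [Prod.mk.injEq, Prod.mk.injEq] at h
        obtain ⟨h1, h2, h3⟩ := h
        subst h1
        exact ⟨rfl, h2, h3⟩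
      · rintro ⟨rfl, h2, h3⟩
        rw [Prod.mk.injEq, Prod.mk.injEq]
        exact ⟨rfl, h2, h3⟩
    simp only [h2]
    by_cases hyz : y = x ∧ z = x <;> simp [hyz]
  have hcollapse : ∀ (f : Fin d × Fin d × Fin d → ℂ),
      (∑ j : Fin d × Fin d × Fin d, if j.2.1 = j.1 ∧ j.2.2 = j.1 then f j else 0) =
      ∑ k : Fin d, f (k, k, k) := by
    intro f
    rw [Fintype.sum_prod_type]
    refine Finset.sum_congr rfl fun u _ => ?_
    rw [Fintype.sum_prod_type]
    simp only [ite_and]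
    rw [Finset.sum_eq_single u (fun x _ hx => by simp [hx]) (by simp)]
    simp
  have part1 : B₃ d *ᵥ ψ = ((d : ℂ) - 1) • ψ := by
    funext p
    obtain ⟨x, y, z⟩ := p
    show ∑ j, B₃ d (x, y, z) j * ψ j = (((d : ℂ) - 1) • ψ) (x, y, z)
    have e1 : ∀ j : Fin d × Fin d × Fin d, B₃ d (x, y, z) j * ψ j =
        if j.2.1 = j.1 ∧ j.2.2 = j.1 then B₃ d (x, y, z) j * c₀ else 0 := by
      intro j
      rw [hψ' j, mul_ite, mul_zero]
    rw [Finset.sum_congr rfl fun j _ => e1 j, hcollapse, ← Finset.sum_mul,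
      B₃_diag_sum d hd x y z]
    rw [Pi.smul_apply, hψ' (x, y, z), smul_eq_mul]
    by_cases hyz : y = x ∧ z = x <;> simp [hyz]
  refine ⟨part1, ?_⟩
  rw [part1]
  have hnorm : star ψ ⬝ᵥ ψ = 1 := by
    rw [dotProduct]
    have e2 : ∀ j : Fin d × Fin d × Fin d, star ψ j * ψ j =
        if j.2.1 = j.1 ∧ j.2.2 = j.1 then star c₀ * c₀ else 0 := by
      intro j
      rw [Pi.star_apply, hψ' j]
      by_cases hj : j.2.1 = j.1 ∧ j.2.2 = j.1 <;> simp [hj]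
    rw [Finset.sum_congr rfl fun j _ => e2 j, hcollapse fun _ => star c₀ * c₀,
      Finset.sum_const, Finset.card_univ, Fintype.card_fin, nsmul_eq_mul]
    have hcc : star c₀ * c₀ = 1 / (d : ℂ) := by
      rw [hc₀]
      have h1 : star ((Real.sqrt d : ℝ) : ℂ) = ((Real.sqrt d : ℝ) : ℂ) :=
        Complex.conj_ofReal _
      rw [star_div₀, star_one, h1, div_mul_div_comm, one_mul,
        ← Complex.ofReal_mul, Real.mul_self_sqrt hdR]
      norm_num
    rw [hcc]
    field_simp
  rw [dotProduct_smul, hnorm, smul_eq_mul, mul_one]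
end
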